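/- Let n ≥ 2 and N ≥ 1 be integers. Let ξ_i = (y_i⁺, ζ_i) ∈ ℝ × ℝ^(2n−1) and u_i ∈ ℝ for i = 1,…,N be a dataset, let c : ℝ^(2n) → ℝ be Lipschitz with constant L_c ≥ 0, let ĉ : ℝ^(2n) → ℝ, and let η : [0,∞) → [0,∞) be monotone nondecreasing such that |c(ξ) − ĉ(ξ)| ≤ η(min_{1≤j≤N} ‖ξ_j − ξ‖) for every ξ ∈ ℝ^(2n). Let f : ℝ^(2n−1) × ℝ → ℝ be Lipschitz with constant L_f ≥ 0 (with respect to the Euclidean norm on the product ℝ^(2n−1) × ℝ). Assume u_i = c(ξ_i) and y_i⁺ = f(ζ_i, u_i) for every i. Then for every i ∈ {1,…,N} and every ζ ∈ ℝ^(2n−1), |y_i⁺ − f(ζ, ĉ(y_i⁺, ζ))| ≤ L_f·(‖ζ_i − ζ‖ + γ_u(‖ζ_i − ζ‖)), where γ_u(ε) := L_c·ε + η(ε). -/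

import Mathlib

/-- The identification of `ℝ × ℝ^(2n−1)` with `ℝ^(2n)` carrying the Euclidean (L²) norm:
`pair n y ζ` is the concatenated vector `(y; ζ)`. -/
noncomputable def pair (n : ℕ) (y : ℝ) (ζ : EuclideanSpace ℝ (Fin (2*n-1))) :
    WithLp 2 (ℝ × EuclideanSpace ℝ (Fin (2*n-1))) :=
  (WithLp.equiv 2 (ℝ × EuclideanSpace ℝ (Fin (2*n-1)))).symm (y, ζ)

/-!
The data point `ξ_i = (y_i⁺, ζ_i)` and the query `(y_i⁺, ζ)` differ only in the second block, so
they are `‖ζ_i − ζ‖` apart. Hence the nearest-neighbour distance is at most `‖ζ_i − ζ‖`, and the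
Lipschitz bound on `c` together with the interpolation bound `η` give
`|u_i − ĉ(y_i⁺, ζ)| ≤ γ_u(‖ζ_i − ζ‖)`. Since `y_i⁺ = f(ζ_i, u_i)`, the Lipschitz bound on `f`,
with the Euclidean norm of the product dominated by the sum of the norms of the blocks, finishes.
-/

theorem WithLp.norm_symm_equiv_sub_symm_equiv_same_fst {α β : Type*}
    [SeminormedAddCommGroup α] [SeminormedAddCommGroup β] (a : α) (b b' : β) :
    ‖(WithLp.equiv 2 (α × β)).symm (a, b) - (WithLp.equiv 2 (α × β)).symm (a, b')‖ = ‖b - b'‖ := by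
  rw [WithLp.prod_norm_eq_of_L2, WithLp.sub_fst, WithLp.sub_snd]
  simp [Real.sqrt_sq (norm_nonneg _)]

theorem norm_pair_sub_pair_same_fst (n : ℕ) (y : ℝ) (ζ ζ' : EuclideanSpace ℝ (Fin (2*n-1))) :
    ‖pair n y ζ - pair n y ζ'‖ = ‖ζ - ζ'‖ :=
  WithLp.norm_symm_equiv_sub_symm_equiv_same_fst y ζ ζ'

theorem Real.sqrt_sq_add_sq_le_add {a b : ℝ} (ha : 0 ≤ a) (hb : 0 ≤ b) :
    √(a ^ 2 + b ^ 2) ≤ a + b :=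
  (Real.sqrt_le_left (add_nonneg ha hb)).mpr (by nlinarith)

theorem abs_sub_le_of_lipschitz_of_le_nearest {ι E : Type*} [SeminormedAddCommGroup E]
    {s : Finset ι} (hs : s.Nonempty) (p : ι → E) {c ĉ : E → ℝ} {L : ℝ} {η : ℝ → ℝ}
    (hc : ∀ ξ ξ', |c ξ - c ξ'| ≤ L * ‖ξ - ξ'‖) (hη : MonotoneOn η (Set.Ici 0)) {ξ : E}
    (hĉ : |c ξ - ĉ ξ| ≤ η (s.inf' hs fun j => ‖p j - ξ‖)) {i : ι} (hi : i ∈ s) :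
    |c (p i) - ĉ ξ| ≤ L * ‖p i - ξ‖ + η ‖p i - ξ‖ := by
  have hnearest_le : s.inf' hs (fun j => ‖p j - ξ‖) ≤ ‖p i - ξ‖ := s.inf'_le _ hi
  have hnearest_nonneg : 0 ≤ s.inf' hs (fun j => ‖p j - ξ‖) :=
    (s.le_inf'_iff hs _).mpr fun _ _ => norm_nonneg _
  calc |c (p i) - ĉ ξ| ≤ |c (p i) - c ξ| + |c ξ - ĉ ξ| := abs_sub_le _ _ _
    _ ≤ L * ‖p i - ξ‖ + η ‖p i - ξ‖ :=
      add_le_add (hc _ _) (hĉ.trans (hη hnearest_nonneg (norm_nonneg _) hnearest_le))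

theorem stmt_1_general (n N : ℕ) (hN : 1 ≤ N)
    (yd : Fin N → ℝ) (ζd : Fin N → EuclideanSpace ℝ (Fin (2*n-1)))
    (ud : Fin N → ℝ)
    (c chat : WithLp 2 (ℝ × EuclideanSpace ℝ (Fin (2*n-1))) → ℝ)
    (Lc : ℝ)
    (hLc : ∀ ξ ξ' : WithLp 2 (ℝ × EuclideanSpace ℝ (Fin (2*n-1))),
      |c ξ - c ξ'| ≤ Lc * ‖ξ - ξ'‖)
    (η : ℝ → ℝ)
    (hη_mono : MonotoneOn η (Set.Ici (0:ℝ)))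
    (hbound : ∀ ξ : WithLp 2 (ℝ × EuclideanSpace ℝ (Fin (2*n-1))),
      |c ξ - chat ξ| ≤
        η (Finset.univ.inf' ⟨⟨0, hN⟩, Finset.mem_univ _⟩
            (fun j : Fin N => ‖pair n (yd j) (ζd j) - ξ‖)))
    (f : EuclideanSpace ℝ (Fin (2*n-1)) → ℝ → ℝ)
    (Lf : ℝ) (hLf0 : 0 ≤ Lf)
    (hLf : ∀ (ζ ζ' : EuclideanSpace ℝ (Fin (2*n-1))) (u u' : ℝ),
      |f ζ u - f ζ' u'| ≤ Lf * Real.sqrt (‖ζ - ζ'‖^2 + |u - u'|^2))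
    (hdata_u : ∀ i : Fin N, ud i = c (pair n (yd i) (ζd i)))
    (hdata_y : ∀ i : Fin N, yd i = f (ζd i) (ud i)) :
    ∀ (i : Fin N) (ζ : EuclideanSpace ℝ (Fin (2*n-1))),
      |yd i - f ζ (chat (pair n (yd i) ζ))| ≤
        Lf * (‖ζd i - ζ‖ + (Lc * ‖ζd i - ζ‖ + η ‖ζd i - ζ‖)) := by
  intro i ζ
  have hu : |ud i - chat (pair n (yd i) ζ)| ≤ Lc * ‖ζd i - ζ‖ + η ‖ζd i - ζ‖ := by
    rw [hdata_u i, ← norm_pair_sub_pair_same_fst n (yd i)]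
    exact abs_sub_le_of_lipschitz_of_le_nearest _ (fun j => pair n (yd j) (ζd j)) hLc hη_mono
      (hbound _) (Finset.mem_univ i)
  calc |yd i - f ζ (chat (pair n (yd i) ζ))|
      ≤ Lf * √(‖ζd i - ζ‖ ^ 2 + |ud i - chat (pair n (yd i) ζ)| ^ 2) := by
        rw [hdata_y i]; exact hLf _ _ _ _
    _ ≤ Lf * (‖ζd i - ζ‖ + |ud i - chat (pair n (yd i) ζ)|) := by
        gcongr; exact Real.sqrt_sq_add_sq_le_add (norm_nonneg _) (abs_nonneg _)
    _ ≤ Lf * (‖ζd i - ζ‖ + (Lc * ‖ζd i - ζ‖ + η ‖ζd i - ζ‖)) := by gcongr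

/-- Proposition 1, inequality (13): output-error bound
`|y_i⁺ − f(ζ, ĉ(y_i⁺, ζ))| ≤ L_f·(‖ζ_i − ζ‖ + γ_u(‖ζ_i − ζ‖))` with
`γ_u(ε) = L_c·ε + η(ε)`.  The map `f` is Lipschitz with constant `L_f` with respect
to the Euclidean norm on the product `ℝ^(2n−1) × ℝ`. -/
theorem stmt_1 (n N : ℕ) (hn : 2 ≤ n) (hN : 1 ≤ N)
    (yd : Fin N → ℝ) (ζd : Fin N → EuclideanSpace ℝ (Fin (2*n-1)))
    (ud : Fin N → ℝ)
    (c chat : WithLp 2 (ℝ × EuclideanSpace ℝ (Fin (2*n-1))) → ℝ)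
    (Lc : ℝ) (hLc0 : 0 ≤ Lc)
    (hLc : ∀ ξ ξ' : WithLp 2 (ℝ × EuclideanSpace ℝ (Fin (2*n-1))),
      |c ξ - c ξ'| ≤ Lc * ‖ξ - ξ'‖)
    (η : ℝ → ℝ)
    (hη_nonneg : ∀ s, 0 ≤ s → 0 ≤ η s)
    (hη_mono : MonotoneOn η (Set.Ici (0:ℝ)))
    (hbound : ∀ ξ : WithLp 2 (ℝ × EuclideanSpace ℝ (Fin (2*n-1))),
      |c ξ - chat ξ| ≤
        η (Finset.univ.inf' ⟨⟨0, hN⟩, Finset.mem_univ _⟩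
            (fun j : Fin N => ‖pair n (yd j) (ζd j) - ξ‖)))
    (f : EuclideanSpace ℝ (Fin (2*n-1)) → ℝ → ℝ)
    (Lf : ℝ) (hLf0 : 0 ≤ Lf)
    (hLf : ∀ (ζ ζ' : EuclideanSpace ℝ (Fin (2*n-1))) (u u' : ℝ),
      |f ζ u - f ζ' u'| ≤ Lf * Real.sqrt (‖ζ - ζ'‖^2 + |u - u'|^2))
    (hdata_u : ∀ i : Fin N, ud i = c (pair n (yd i) (ζd i)))
    (hdata_y : ∀ i : Fin N, yd i = f (ζd i) (ud i)) :
    ∀ (i : Fin N) (ζ : EuclideanSpace ℝ (Fin (2*n-1))),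
      |yd i - f ζ (chat (pair n (yd i) ζ))| ≤
        Lf * (‖ζd i - ζ‖ + (Lc * ‖ζd i - ζ‖ + η ‖ζd i - ζ‖)) :=
  stmt_1_general n N hN yd ζd ud c chat Lc hLc η hη_mono hbound f Lf hLf0 hLf hdata_u hdata_y
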